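/- Suppose f : [0,1] → ℝ is concave and continuous with f(0) > 0, f(1) > 0, and there exists r' ∈ (0,1) with f(r') < min(r'D₁, (1−r')D₂). Then there exist α, β with 0 < α < β < 1 such that min(rD₁, (1−r)D₂) ≤ f(r) for r ∈ [0,α] ∪ [β,1] and f(r) < min(rD₁, (1−r)D₂) for r ∈ (α, β). -/
import Mathlib


open Set

theorem two_threshold_structure (D1 D2 : ℝ) (hD1 : 0 < D1) (hD2 : 0 < D2)
    (f : ℝ → ℝ) (hconc : ConcaveOn ℝ (Icc (0:ℝ) 1) f)
    (hcont : ContinuousOn f (Icc (0:ℝ) 1))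
    (hf0 : 0 < f 0) (hf1 : 0 < f 1)
    (hbelow : ∃ r' ∈ Ioo (0:ℝ) 1, f r' < min (r' * D1) ((1 - r') * D2)) :
    ∃ α β : ℝ, 0 < α ∧ α < β ∧ β < 1 ∧
      (∀ r ∈ Icc (0:ℝ) α ∪ Icc β 1, min (r * D1) ((1 - r) * D2) ≤ f r) ∧
      (∀ r ∈ Ioo α β, f r < min (r * D1) ((1 - r) * D2)) := by
  obtain ⟨r', hr'mem, hrlt⟩ := hbelow
  obtain ⟨hr'0, hr'1⟩ := hr'mem
  obtain ⟨h1, h2⟩ := lt_min_iff.mp hrlt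
  have hr'Icc : r' ∈ Icc (0:ℝ) 1 := ⟨le_of_lt hr'0, le_of_lt hr'1⟩
  set I1 : Set ℝ := {r ∈ Icc (0:ℝ) 1 | r * D1 ≤ f r} with hI1def
  set I2 : Set ℝ := {r ∈ Icc (0:ℝ) 1 | (1 - r) * D2 ≤ f r} with hI2def
  -- convexity of the affine comparison functions
  have hlin1 : ConvexOn ℝ (Icc (0:ℝ) 1) (fun r => r * D1) := by
    refine ⟨convex_Icc 0 1, ?_⟩
    intro x _ y _ a b _ _ _
    simp only [smul_eq_mul]
    apply le_of_eq; ring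
  have hlin2 : ConvexOn ℝ (Icc (0:ℝ) 1) (fun r => (1 - r) * D2) := by
    refine ⟨convex_Icc 0 1, ?_⟩
    intro x _ y _ a b _ _ hab
    simp only [smul_eq_mul]
    apply le_of_eq
    have : a = 1 - b := by linarith
    subst this; ring
  have hg1 : ConcaveOn ℝ (Icc (0:ℝ) 1) (f - fun r => r * D1) := hconc.sub hlin1
  have hg2 : ConcaveOn ℝ (Icc (0:ℝ) 1) (f - fun r => (1 - r) * D2) := hconc.sub hlin2
  have hI1conv : Convex ℝ I1 := by
    have := hg1.convex_ge 0
    convert this using 1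
    ext r
    simp only [hI1def, Pi.sub_apply, sub_nonneg, mem_sep_iff]
  have hI2conv : Convex ℝ I2 := by
    have := hg2.convex_ge 0
    convert this using 1
    ext r
    simp only [hI2def, Pi.sub_apply, sub_nonneg, mem_sep_iff]
  -- closedness and compactness
  have hI1closed : IsClosed I1 := by
    have heq : I1 = Icc (0:ℝ) 1 ∩ (fun r => f r - r * D1) ⁻¹' Ici 0 := by
      ext r
      simp only [hI1def, mem_sep_iff, mem_inter_iff, mem_preimage, mem_Ici, sub_nonneg]
    rw [heq]
    exact (hcont.sub ((continuous_id.mul continuous_const).continuousOn)).preimage_isClosed_of_isClosed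
      isClosed_Icc isClosed_Ici
  have hI2closed : IsClosed I2 := by
    have heq : I2 = Icc (0:ℝ) 1 ∩ (fun r => f r - (1 - r) * D2) ⁻¹' Ici 0 := by
      ext r
      simp only [hI2def, mem_sep_iff, mem_inter_iff, mem_preimage, mem_Ici, sub_nonneg]
    rw [heq]
    exact (hcont.sub (((continuous_const.sub continuous_id).mul continuous_const).continuousOn)).preimage_isClosed_of_isClosed
      isClosed_Icc isClosed_Ici
  have hI1sub : I1 ⊆ Icc (0:ℝ) 1 := fun r hr => hr.1
  have hI2sub : I2 ⊆ Icc (0:ℝ) 1 := fun r hr => hr.1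
  have hI1cpt : IsCompact I1 := isCompact_Icc.of_isClosed_subset hI1closed hI1sub
  have hI2cpt : IsCompact I2 := isCompact_Icc.of_isClosed_subset hI2closed hI2sub
  have h0I1 : (0:ℝ) ∈ I1 := ⟨⟨le_refl 0, zero_le_one⟩, by simpa using hf0.le⟩
  have h1I2 : (1:ℝ) ∈ I2 := ⟨⟨zero_le_one, le_refl 1⟩, by simpa using hf1.le⟩
  set α := sSup I1 with hαdef
  set β := sInf I2 with hβdef
  have hαmem : α ∈ I1 := hI1cpt.sSup_mem ⟨0, h0I1⟩
  have hβmem : β ∈ I2 := hI2cpt.sInf_mem ⟨1, h1I2⟩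
  have hI1bdd : BddAbove I1 := hI1cpt.bddAbove
  have hI2bdd : BddBelow I2 := hI2cpt.bddBelow
  have hI1oc : OrdConnected I1 := hI1conv.ordConnected
  have hI2oc : OrdConnected I2 := hI2conv.ordConnected
  -- all elements of I1 are < r', of I2 are > r'
  have hI1lt : ∀ z ∈ I1, z < r' := by
    intro z hz
    by_contra hge
    push_neg at hge
    have : r' ∈ I1 := hI1oc.out h0I1 hz ⟨hr'0.le, hge⟩
    exact absurd this.2 (not_le.mpr h1)
  have hI2gt : ∀ z ∈ I2, r' < z := by
    intro z hz
    by_contra hle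
    push_neg at hle
    have : r' ∈ I2 := hI2oc.out hz h1I2 ⟨hle, hr'1.le⟩
    exact absurd this.2 (not_le.mpr h2)
  have hαr' : α < r' := hI1lt α hαmem
  have hβr' : r' < β := hI2gt β hβmem
  have hαβ : α < β := hαr'.trans hβr'
  -- α > 0 via concavity at 0
  have hαpos : 0 < α := by
    set C : ℝ := f 0 + (r' * D1 - f r') with hC
    have hCpos : 0 < C := by simp only [hC]; linarith
    set t : ℝ := f 0 / (2 * C) with ht
    have htpos : 0 < t := by positivity
    have ht1 : t < 1 := by
      rw [ht, div_lt_one (by positivity)]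
      linarith
    have htC : t * C = f 0 / 2 := by
      rw [ht]; field_simp
    have hxI1 : t * r' ∈ I1 := by
      have hcomb := hconc.2 (Set.left_mem_Icc.mpr zero_le_one) hr'Icc
        (show (0:ℝ) ≤ 1 - t by linarith) htpos.le (show (1 - t) + t = 1 by ring)
      simp only [smul_eq_mul, mul_zero, zero_add] at hcomb
      refine ⟨⟨by positivity, ?_⟩, ?_⟩
      · nlinarith
      · have : (1 - t) * f 0 + t * f r' ≥ t * r' * D1 := by nlinarith
        linarith
    have : t * r' ≤ α := le_csSup hI1bdd hxI1
    nlinarith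
  -- β < 1 via concavity at 1
  have hβ1 : β < 1 := by
    set C : ℝ := f 1 + ((1 - r') * D2 - f r') with hC
    have hCpos : 0 < C := by simp only [hC]; linarith
    set s : ℝ := f 1 / (2 * C) with hs
    have hspos : 0 < s := by positivity
    have hs1 : s < 1 := by
      rw [hs, div_lt_one (by positivity)]
      linarith
    have hsC : s * C = f 1 / 2 := by
      rw [hs]; field_simp
    set y : ℝ := s * r' + (1 - s) * 1 with hy
    have hyI2 : y ∈ I2 := by
      have hcomb := hconc.2 hr'Icc (Set.right_mem_Icc.mpr zero_le_one)
        hspos.le (show (0:ℝ) ≤ 1 - s by linarith) (show s + (1 - s) = 1 by ring)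
      simp only [smul_eq_mul, mul_one] at hcomb
      have hyeq : s * r' + (1 - s) = y := by rw [hy]; ring
      rw [hyeq] at hcomb
      refine ⟨⟨?_, ?_⟩, ?_⟩
      · nlinarith
      · nlinarith
      · have : s * f r' + (1 - s) * f 1 ≥ (1 - y) * D2 := by
          simp only [hy]; nlinarith
        linarith
    have hle : β ≤ y := csInf_le hI2bdd hyI2
    have : y < 1 := by simp only [hy]; nlinarith
    linarith
  refine ⟨α, β, hαpos, hαβ, hβ1, ?_, ?_⟩
  · rintro r (hr | hr)
    · have hrI1 : r ∈ I1 := hI1oc.out h0I1 hαmem hr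
      exact le_trans (min_le_left _ _) hrI1.2
    · have hrI2 : r ∈ I2 := hI2oc.out hβmem h1I2 hr
      exact le_trans (min_le_right _ _) hrI2.2
  · rintro r ⟨hrα, hrβ⟩
    have hrIcc : r ∈ Icc (0:ℝ) 1 := ⟨(hαpos.trans hrα).le, (hrβ.trans hβ1).le⟩
    have hn1 : r ∉ I1 := fun hr => absurd (le_csSup hI1bdd hr) (not_le.mpr hrα)
    have hn2 : r ∉ I2 := fun hr => absurd (csInf_le hI2bdd hr) (not_le.mpr hrβ)
    rw [lt_min_iff]
    constructor
    · by_contra hle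
      push_neg at hle
      exact hn1 ⟨hrIcc, hle⟩
    · by_contra hle
      push_neg at hle
      exact hn2 ⟨hrIcc, hle⟩
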